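/- If ⟨ε, ε, ε⟩ →* ⟨α, β, v⟩ in the queue split-sequence transition system, then α·β ∈ T_queue; moreover, if v ∈ V then the queue obtained by executing α·β from the empty queue is nonempty with front value v, the last enq symbol occurring in α is enq(v), and that enqueue is not matched by any dequeue in α·β; and if v = ε then every enq symbol occurring in α is matched by a deq symbol in α·β (under the FIFO matching pairing the i-th enqueue with the i-th value-removing dequeue). -/

import Mathlib

/-- τ1 ∼ τ2 : the two sequences admit exactly the same legal continuations. -/
def SpecEquiv {A : Type} (T : Set (List A)) (τ1 τ2 : List A) : Prop :=
  ∀ τ' : List A, τ1 ++ τ' ∈ T ↔ τ2 ++ τ' ∈ T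

/-- A specification is anagram-agnostic if any two of its members that are
permutations of one another (anagrams) are equivalent. -/
def AnagramAgnostic {A : Type} (T : Set (List A)) : Prop :=
  ∀ τ1 ∈ T, ∀ τ2 ∈ T, τ1.Perm τ2 → SpecEquiv T τ1 τ2

/-- Queue symbols: `enq v`, `peek v` (`v ∈ V`), `deq (some v)` (`v ∈ V`) and
the empty dequeue `deq none` (i.e. `deq(ε)`). -/
inductive QueueOp (V : Type) : Type
  | enq (v : V) : QueueOp V
  | deq (v : Option V) : QueueOp V
  | peek (v : V) : QueueOp V
deriving DecidableEq

/-- Execution of queue sequences: `QueueExec q w q'` holds when `w` can be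
legally executed from the FIFO queue `q` (front at the head), ending in `q'`.
`enq v` appends `v` at the back; `deq (some v)` (resp. `peek v`) is enabled
only when the front is `v` and removes it (resp. leaves the queue unchanged);
`deq none` is enabled only when the queue is empty. -/
inductive QueueExec {V : Type} : List V → List (QueueOp V) → List V → Prop
  | nil (q : List V) : QueueExec q [] q
  | enq {q q' : List V} {w : List (QueueOp V)} (v : V) :
      QueueExec (q ++ [v]) w q' → QueueExec q (QueueOp.enq v :: w) q'
  | deq {q q' : List V} {w : List (QueueOp V)} (v : V) :
      QueueExec q w q' → QueueExec (v :: q) (QueueOp.deq (some v) :: w) q'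
  | peek {q q' : List V} {w : List (QueueOp V)} (v : V) :
      QueueExec (v :: q) w q' → QueueExec (v :: q) (QueueOp.peek v :: w) q'
  | deqEmpty {q' : List V} {w : List (QueueOp V)} :
      QueueExec [] w q' → QueueExec [] (QueueOp.deq none :: w) q'

/-- The queue specification: sequences executable from the empty queue. -/
def TQueue (V : Type) : Set (List (QueueOp V)) :=
  {w | ∃ q : List V, QueueExec [] w q}

/-- The queue split-sequence transition system acting on triples
`(α, β, v)` with `α, β` sequences of queue symbols and `v ∈ V ∪ {ε}`
(`none` is `ε`). -/
inductive QStep {V : Type} :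
    List (QueueOp V) × List (QueueOp V) × Option V →
    List (QueueOp V) × List (QueueOp V) × Option V → Prop
  | r1 (α β : List (QueueOp V)) (v' : V) :
      QStep (α, QueueOp.enq v' :: β, none) (α ++ [QueueOp.enq v'], β, some v')
  | r2 (α β : List (QueueOp V)) (v' : V) :
      QStep (α, β, some v') (α, β ++ [QueueOp.peek v'], some v')
  | r3 (α β : List (QueueOp V)) (v' : V) :
      QStep (α, β, some v') (α, β ++ [QueueOp.deq (some v')], none)
  | r4 (α : List (QueueOp V)) :
      QStep (α, [], none) (α, [QueueOp.deq none], none)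
  | r5 (α β : List (QueueOp V)) (v' : V) (v : Option V) :
      QStep (α, QueueOp.peek v' :: β, v) (α ++ [QueueOp.peek v'], β, v)
  | r6 (α β : List (QueueOp V)) (v' : V) (v : Option V) :
      QStep (α, QueueOp.deq (some v') :: β, v) (α ++ [QueueOp.deq (some v')], β, v)
  | r7 (α β : List (QueueOp V)) (v' : V) (v : Option V) :
      QStep (α, β, v) (α, β ++ [QueueOp.enq v'], v)

/-- Reflexive-transitive closure `→*` of the split-sequence transition system. -/
def QSteps {V : Type} :
    List (QueueOp V) × List (QueueOp V) × Option V →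
    List (QueueOp V) × List (QueueOp V) × Option V → Prop :=
  Relation.ReflTransGen QStep

/-- Number of enqueue symbols in a sequence. -/
def countEnq {V : Type} (l : List (QueueOp V)) : ℕ :=
  l.countP (fun s => match s with | QueueOp.enq _ => true | _ => false)

/-- Number of value-removing dequeue symbols (`deq v`, `v ∈ V`) in a
sequence.  Under the FIFO matching (pairing the i-th enqueue with the i-th
value-removing dequeue), the i-th enqueue of a legal sequence is matched
exactly when `i` is at most this count. -/
def countDeqVal {V : Type} (l : List (QueueOp V)) : ℕ :=
  l.countP (fun s => match s with | QueueOp.deq (some _) => true | _ => false)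

/-- Values of the enqueue symbols occurring in a sequence, in order. -/
def enqVals {V : Type} (l : List (QueueOp V)) : List V :=
  l.filterMap (fun s => match s with | QueueOp.enq u => some u | _ => none)

lemma enqVals_append {V : Type} (l l' : List (QueueOp V)) :
    enqVals (l ++ l') = enqVals l ++ enqVals l' := by
  simp [enqVals]

lemma QueueExec.append {V : Type} {q0 q q' : List V} {w w' : List (QueueOp V)}
    (h1 : QueueExec q0 w q) (h2 : QueueExec q w' q') : QueueExec q0 (w ++ w') q' := by
  induction h1 with
  | nil => simpa
  | enq v _ ih => exact QueueExec.enq v (ih h2)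
  | deq v _ ih => exact QueueExec.deq v (ih h2)
  | peek v _ ih => exact QueueExec.peek v (ih h2)
  | deqEmpty _ ih => exact QueueExec.deqEmpty (ih h2)

/-- The inductive invariant of the split-sequence transition system. -/
def QInv {V : Type} : List (QueueOp V) × List (QueueOp V) × Option V → Prop
  | (α, β, none) =>
      QueueExec [] (α ++ β) (enqVals β) ∧ countDeqVal (α ++ β) = countEnq α
  | (α, β, some v0) =>
      QueueExec [] (α ++ β) (v0 :: enqVals β) ∧
      countDeqVal (α ++ β) + 1 = countEnq α ∧
      ∃ γ δ : List (QueueOp V), α = γ ++ QueueOp.enq v0 :: δ ∧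
        ∀ u : V, QueueOp.enq u ∉ δ

@[simp] lemma countEnq_append {V : Type} (l l' : List (QueueOp V)) :
    countEnq (l ++ l') = countEnq l + countEnq l' := List.countP_append

@[simp] lemma countDeqVal_append {V : Type} (l l' : List (QueueOp V)) :
    countDeqVal (l ++ l') = countDeqVal l + countDeqVal l' := List.countP_append

lemma inv_step {V : Type} {s s' : List (QueueOp V) × List (QueueOp V) × Option V}
    (hs : QStep s s') (hi : QInv s) : QInv s' := by
  cases hs with
  | r1 α β v' =>
      obtain ⟨hexec, hcnt⟩ := hi
      refine ⟨by simpa [enqVals] using hexec, ?_, α, [], rfl, by simp⟩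
      simp only [countEnq, countDeqVal, List.countP_append, List.countP_cons] at hcnt ⊢
      simp at hcnt ⊢
      omega
  | r2 α β v' =>
      obtain ⟨hexec, hcnt, hlast⟩ := hi
      have h1 : QueueExec [] ((α ++ β) ++ [QueueOp.peek v']) (v' :: enqVals β) :=
        hexec.append (QueueExec.peek v' (QueueExec.nil _))
      refine ⟨by simpa [enqVals_append, enqVals] using h1, ?_, hlast⟩
      simp only [countDeqVal, List.countP_append, List.countP_cons] at hcnt ⊢
      simp
      omega
  | r3 α β v' =>
      obtain ⟨hexec, hcnt, hlast⟩ := hi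
      have h1 : QueueExec [] ((α ++ β) ++ [QueueOp.deq (some v')]) (enqVals β) :=
        hexec.append (QueueExec.deq v' (QueueExec.nil _))
      refine ⟨by simpa [enqVals_append, enqVals] using h1, ?_⟩
      simp only [countDeqVal, List.countP_append, List.countP_cons] at hcnt ⊢
      simp
      omega
  | r4 α =>
      obtain ⟨hexec, hcnt⟩ := hi
      have hexec' : QueueExec [] α ([] : List V) := by simpa [enqVals] using hexec
      have h1 : QueueExec [] (α ++ [QueueOp.deq none]) ([] : List V) :=
        hexec'.append (QueueExec.deqEmpty (QueueExec.nil _))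
      refine ⟨by simpa [enqVals] using h1, ?_⟩
      simp only [countEnq, countDeqVal, List.countP_append, List.countP_cons] at hcnt ⊢
      simp at hcnt ⊢
      omega
  | r5 α β v' v =>
      cases v with
      | none =>
          obtain ⟨hexec, hcnt⟩ := hi
          refine ⟨by simpa [enqVals] using hexec, ?_⟩
          simp only [countEnq, countDeqVal, List.countP_append, List.countP_cons] at hcnt ⊢
          simp at hcnt ⊢
          omega
      | some v0 =>
          obtain ⟨hexec, hcnt, γ, δ, hα, hδ⟩ := hi
          refine ⟨by simpa [enqVals] using hexec, ?_, γ, δ ++ [QueueOp.peek v'], by simp [hα], ?_⟩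
          · simp only [countEnq, countDeqVal, List.countP_append, List.countP_cons] at hcnt ⊢
            simp at hcnt ⊢
            omega
          · intro u hu
            rcases List.mem_append.1 hu with h | h
            · exact hδ u h
            · simp at h
  | r6 α β v' v =>
      cases v with
      | none =>
          obtain ⟨hexec, hcnt⟩ := hi
          refine ⟨by simpa [enqVals] using hexec, ?_⟩
          simp only [countEnq, countDeqVal, List.countP_append, List.countP_cons] at hcnt ⊢
          simp at hcnt ⊢
          omega
      | some v0 =>
          obtain ⟨hexec, hcnt, γ, δ, hα, hδ⟩ := hi
          refine ⟨by simpa [enqVals] using hexec, ?_, γ, δ ++ [QueueOp.deq (some v')], by simp [hα], ?_⟩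
          · simp only [countEnq, countDeqVal, List.countP_append, List.countP_cons] at hcnt ⊢
            simp at hcnt ⊢
            omega
          · intro u hu
            rcases List.mem_append.1 hu with h | h
            · exact hδ u h
            · simp at h
  | r7 α β v' v =>
      cases v with
      | none =>
          obtain ⟨hexec, hcnt⟩ := hi
          have h1 : QueueExec [] ((α ++ β) ++ [QueueOp.enq v']) (enqVals β ++ [v']) :=
            hexec.append (QueueExec.enq v' (QueueExec.nil _))
          refine ⟨by simpa [enqVals_append, enqVals] using h1, ?_⟩
          simp only [countEnq, countDeqVal, List.countP_append, List.countP_cons] at hcnt ⊢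
          simp
          omega
      | some v0 =>
          obtain ⟨hexec, hcnt, hlast⟩ := hi
          have h1 : QueueExec [] ((α ++ β) ++ [QueueOp.enq v']) ((v0 :: enqVals β) ++ [v']) :=
            hexec.append (QueueExec.enq v' (QueueExec.nil _))
          refine ⟨by simpa [enqVals_append, enqVals] using h1, ?_, hlast⟩
          simp only [countEnq, countDeqVal, List.countP_append, List.countP_cons] at hcnt ⊢
          simp
          omega

lemma inv_of_qsteps {V : Type} {s : List (QueueOp V) × List (QueueOp V) × Option V}
    (h : QSteps (([] : List (QueueOp V)), ([] : List (QueueOp V)), (none : Option V)) s) :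
    QInv s := by
  induction h with
  | refl => exact ⟨QueueExec.nil [], rfl⟩
  | tail _ hstep ih => exact inv_step hstep ih

theorem stmt19 {V : Type} (α β : List (QueueOp V)) (v : Option V)
    (h : QSteps (([] : List (QueueOp V)), ([] : List (QueueOp V)), (none : Option V))
      (α, β, v)) :
    (α ++ β ∈ TQueue V) ∧
    (∀ v0 : V, v = some v0 →
      -- the queue after executing α·β is nonempty with front value v0
      (∃ q' : List V, QueueExec [] (α ++ β) (v0 :: q')) ∧
      -- the last enq symbol occurring in α is enq(v0)
      (∃ γ δ : List (QueueOp V), α = γ ++ QueueOp.enq v0 :: δ ∧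
        ∀ u : V, QueueOp.enq u ∉ δ) ∧
      -- that enqueue (the countEnq α-th one) is not matched by any dequeue in α·β
      countDeqVal (α ++ β) < countEnq α) ∧
    (v = none →
      -- every enqueue in α is matched by a value-removing dequeue in α·β
      countEnq α ≤ countDeqVal (α ++ β)) := by
  have hi := inv_of_qsteps h
  cases v with
  | none =>
      obtain ⟨hexec, hcnt⟩ := hi
      exact ⟨⟨_, hexec⟩, fun v0 hv => by simp at hv, fun _ => hcnt.ge⟩
  | some v0 =>
      obtain ⟨hexec, hcnt, hlast⟩ := hi
      exact ⟨⟨_, hexec⟩, fun u hu => by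
        cases hu; exact ⟨⟨_, hexec⟩, hlast, by omega⟩,
        fun hv => by simp at hv⟩
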